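/- arXiv:1503.03935 — 3 statements merged into one kernel-verified Lean document; each statement's English description precedes it below -/
import Mathlib

section
/- E-identity of the pseudospectral update rule: with the notation of the pseudospectral discretization (F the n×n normalized DFT matrix; d ∈ ℂⁿ with every d_s nonzero and purely imaginary; D = diag(d); α ∈ ℝ; H = Id − α·D²; B_k = F·I_k·F⁻¹·D; U^♭ the flat of U), define E_{ip} = Tr(B_i^♭·B_p*). Then for every X ∈ ℂⁿ and every index p, Σ_i X_i·E_{ip} = (1/n)·(F·H·F⁻¹·X)_p. -/
open Matrix

open Real ComplexConjugate
open scoped Complex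
open Complex (I)

/-!
By orthogonality of the characters of `ℤ/nℤ` the DFT matrix is unitary, so `F⁻¹ = Fᴴ`. Row `0` of
`B_k` is then `n^{-1/2} · conj (F_{k s}) · d_s`, and the flat multiplies its `s`-th entry by
`α - d_s⁻²`. As `conj d_s = -d_s`, the product `d_s (α - d_s⁻²) conj d_s` is `1 - α d_s²`, the
`s`-th diagonal entry of `H`, so `E_{ip} = n⁻¹ (F H Fᴴ)_{pi}`; summing against `X` gives the claim.
-/

lemma geom_sum_eq_ite_of_pow_eq_one {K : Type*} [Field K] [DecidableEq K] {x : K} {n : ℕ}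
    (hx : x ^ n = 1) : ∑ i ∈ Finset.range n, x ^ i = if x = 1 then (n : K) else 0 := by
  split_ifs with h1
  · simp [h1]
  · rw [geom_sum_eq h1, hx, sub_self, zero_div]

lemma mul_sub_inv_sq_mul_conj {z : ℂ} (hz : z ≠ 0) (hconj : conj z = -z) (c : ℂ) :
    z * (c - (z ^ 2)⁻¹) * conj z = 1 - c * z ^ 2 := by
  rw [hconj]
  field_simp
  ring

lemma mul_diagonal_ite_mul_apply {ι R : Type*} [Fintype ι] [DecidableEq ι] [Semiring R]
    (A C : Matrix ι ι R) (k i j : ι) :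
    (A * diagonal (fun l => if l = k then (1 : R) else 0) * C) i j = A i k * C k j := by
  rw [mul_apply]
  simp [mul_diagonal]

lemma trace_mul_eq_sum_of_rows_eq_zero {ι R : Type*} [Fintype ι] [DecidableEq ι]
    [NonUnitalNonAssocSemiring R] {M : Matrix ι ι R} (N : Matrix ι ι R) {r : ι}
    (hM : ∀ i, i ≠ r → M i = 0) : trace (M * N) = ∑ s, M r s * N s r := by
  rw [trace, Finset.sum_eq_single r (fun i _ hi => by simp [mul_apply, hM i hi]) (by simp)]
  rfl

lemma one_sub_smul_diagonal_sq {ι R : Type*} [Fintype ι] [DecidableEq ι] [CommRing R]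
    (c : R) (d : ι → R) : 1 - c • diagonal d ^ 2 = diagonal fun s => 1 - c * d s ^ 2 := by
  ext i j
  rcases eq_or_ne i j with rfl | h <;> simp [diagonal_pow, *]

lemma exp_mul_conj_exp_eq_zpow_pow (n j k s : ℕ) :
    cexp (2 * π * I * j * s / n) * conj (cexp (2 * π * I * k * s / n)) =
      (cexp (2 * π * I / n) ^ ((j : ℤ) - k)) ^ s := by
  rw [← Complex.exp_conj, ← Complex.exp_add, ← Complex.exp_int_mul, ← Complex.exp_nat_mul]
  congr 1
  simp only [map_div₀, map_mul, Complex.conj_I, Complex.conj_ofReal, map_natCast, map_ofNat]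
  push_cast
  ring

lemma sum_exp_mul_conj_exp {n : ℕ} (j k : Fin n) :
    ∑ s : Fin n, cexp (2 * π * I * j * s / n) * conj (cexp (2 * π * I * k * s / n)) =
      if j = k then (n : ℂ) else 0 := by
  have hn : n ≠ 0 := (Fin.pos j).ne'
  have hω := Complex.isPrimitiveRoot_exp n hn
  set x := cexp (2 * π * I / n) ^ ((j : ℤ) - k)
  have hxn : x ^ n = 1 := by
    rw [← zpow_natCast, ← _root_.zpow_mul, hω.zpow_eq_one_iff_dvd]
    exact dvd_mul_left _ _
  have hx1 : x = 1 ↔ j = k := by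
    rw [hω.zpow_eq_one_iff_dvd, Fin.ext_iff]
    constructor
    · intro h
      have := Int.eq_zero_of_abs_lt_dvd h (by rw [abs_lt]; omega)
      omega
    · intro h; simp [h]
  simp_rw [exp_mul_conj_exp_eq_zpow_pow]
  rw [Fin.sum_univ_eq_sum_range (x ^ ·), geom_sum_eq_ite_of_pow_eq_one hxn]
  exact if_congr hx1 rfl rfl

lemma inv_sqrt_mul_conj_inv_sqrt (n : ℕ) : (√n : ℂ)⁻¹ * conj (√n : ℂ)⁻¹ = (n : ℂ)⁻¹ := by
  rw [map_inv₀, Complex.conj_ofReal, ← mul_inv, ← Complex.ofReal_mul,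
    Real.mul_self_sqrt n.cast_nonneg, Complex.ofReal_natCast]

noncomputable def dft (n : ℕ) : Matrix (Fin n) (Fin n) ℂ :=
  of fun j k => (√n : ℂ)⁻¹ * cexp (2 * π * I * (j : ℕ) * (k : ℕ) / n)

lemma dft_apply (n : ℕ) (j k : Fin n) :
    dft n j k = (√n : ℂ)⁻¹ * cexp (2 * π * I * (j : ℕ) * (k : ℕ) / n) := rfl

lemma dft_apply_comm (n : ℕ) (j k : Fin n) : dft n j k = dft n k j := by
  simp only [dft_apply, mul_right_comm _ ((j : ℕ) : ℂ)]

lemma dft_apply_of_val_eq_zero {n : ℕ} {j : Fin n} (hj : (j : ℕ) = 0) (k : Fin n) :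
    dft n j k = (√n : ℂ)⁻¹ := by
  simp [dft_apply, hj]

lemma dft_mul_conjTranspose (n : ℕ) : dft n * (dft n)ᴴ = 1 := by
  ext j k
  simp only [mul_apply, conjTranspose_apply, RCLike.star_def, dft_apply, map_mul]
  calc _ = (√n : ℂ)⁻¹ * conj (√n : ℂ)⁻¹ * ∑ s : Fin n,
        cexp (2 * π * I * j * s / n) * conj (cexp (2 * π * I * k * s / n)) := by
        rw [Finset.mul_sum]; congr! 1 with s; ring
    _ = (1 : Matrix (Fin n) (Fin n) ℂ) j k := by
      rw [inv_sqrt_mul_conj_inv_sqrt, sum_exp_mul_conj_exp, one_apply]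
      split_ifs
      · exact inv_mul_cancel₀ (Nat.cast_ne_zero.2 (Fin.pos j).ne')
      · exact mul_zero _

lemma inv_dft (n : ℕ) : (dft n)⁻¹ = (dft n)ᴴ := inv_eq_right_inv (dft_mul_conjTranspose n)

/-- E-identity of the pseudospectral update rule: with `F` the normalized DFT
matrix, `D = diag(d)` (entries nonzero and purely imaginary), `H = Id − α·D²`,
`B_k = F·I_k·F⁻¹·D`, `U^♭` the flat of `U` and `E_{ip} = Tr(B_i^♭·B_p*)`,
one has `Σ_i X_i·E_{ip} = (1/n)·(F·H·F⁻¹·X)_p`. -/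
theorem pseudospectral_E_identity (n : ℕ) (hn : 0 < n)
    (F : Matrix (Fin n) (Fin n) ℂ)
    (hF : ∀ j k : Fin n, F j k =
      (Real.sqrt n : ℂ)⁻¹ *
        Complex.exp (2 * Real.pi * Complex.I * (j : ℕ) * (k : ℕ) / n))
    (d : Fin n → ℂ) (hd0 : ∀ s, d s ≠ 0)
    (hdim : ∀ s, (starRingEnd ℂ) (d s) = -d s)
    (α : ℝ)
    (D H : Matrix (Fin n) (Fin n) ℂ)
    (hD : D = Matrix.diagonal d)
    (hH : H = 1 - (α : ℂ) • D ^ 2)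
    (B : Fin n → Matrix (Fin n) (Fin n) ℂ)
    (hB : ∀ k, B k =
      F * Matrix.diagonal (fun i => if i = k then (1 : ℂ) else 0) * F⁻¹ * D)
    (flat : Matrix (Fin n) (Fin n) ℂ → Matrix (Fin n) (Fin n) ℂ)
    (hflat : ∀ (U : Matrix (Fin n) (Fin n) ℂ) (i s : Fin n),
      flat U i s =
        if i = (⟨0, hn⟩ : Fin n) then
          U ⟨0, hn⟩ s * ((α : ℂ) - ((d s) ^ 2)⁻¹)
        else 0)
    (E : Fin n → Fin n → ℂ)
    (hE : ∀ i p, E i p = Matrix.trace (flat (B i) * (B p)ᴴ))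
    (X : Fin n → ℂ) (p : Fin n) :
    ∑ i, X i * E i p = (n : ℂ)⁻¹ * ((F * H * F⁻¹) *ᵥ X) p := by
  obtain rfl : F = dft n := Matrix.ext hF
  subst hD hH
  have hrow : ∀ k s, B k ⟨0, hn⟩ s = (√n : ℂ)⁻¹ * conj (dft n k s) * d s := fun k s => by
    rw [hB, mul_diagonal, mul_diagonal_ite_mul_apply, inv_dft, conjTranspose_apply,
      dft_apply_of_val_eq_zero rfl, dft_apply_comm, RCLike.star_def]
  have hflat_row : ∀ U j, j ≠ ⟨0, hn⟩ → flat U j = 0 := fun U j hj =>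
    funext fun s => by rw [hflat, if_neg hj]; rfl
  have hentry : ∀ i, E i p = (n : ℂ)⁻¹ *
      (dft n * (1 - (α : ℂ) • diagonal d ^ 2) * (dft n)⁻¹ : Matrix _ _ ℂ) p i := fun i => by
    rw [hE, trace_mul_eq_sum_of_rows_eq_zero _ (hflat_row _), one_sub_smul_diagonal_sq, inv_dft,
      mul_apply, Finset.mul_sum]
    refine Finset.sum_congr rfl fun s _ => ?_
    rw [hflat, if_pos rfl, conjTranspose_apply, hrow, hrow, mul_diagonal, conjTranspose_apply,
      ← mul_sub_inv_sq_mul_conj (hd0 s) (hdim s), ← inv_sqrt_mul_conj_inv_sqrt]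
    simp only [RCLike.star_def, map_mul, Complex.conj_conj]
    ring
  simp only [hentry, mulVec, dotProduct, Finset.mul_sum]
  exact Finset.sum_congr rfl fun i _ => by ring
end

section
/- C-identity of the pseudospectral update rule: with the notation of the pseudospectral discretization (F the n×n normalized DFT matrix; d ∈ ℂⁿ with every d_s nonzero and purely imaginary; D = diag(d); α ∈ ℝ; H = Id − α·D²; B_k = F·I_k·F⁻¹·D; U^♭ the flat of U), define C_{ijp} = Tr(B_i*·B_j^♭·B_p*). Then for every X ∈ ℂⁿ and every index p, Σ_{i,j} conj(X_i)·X_j·C_{ijp} = (1/n)·(F⁻¹·conj(D)·F·conj(X))_p · conj( (F⁻¹·H·F·conj(X))_p ). -/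
open Matrix

/-- C-identity of the pseudospectral update rule: with `F` the normalized DFT
matrix, `D = diag(d)` (entries nonzero and purely imaginary), `H = Id − α·D²`,
`B_k = F·I_k·F⁻¹·D`, `U^♭` the flat of `U` and
`C_{ijp} = Tr(B_i*·B_j^♭·B_p*)`, one has
`Σ_{i,j} conj(X_i)·X_j·C_{ijp}
  = (1/n)·(F⁻¹·conj(D)·F·conj(X))_p · conj((F⁻¹·H·F·conj(X))_p)`. -/
theorem pseudospectral_C_identity (n : ℕ) (hn : 0 < n)
    (F : Matrix (Fin n) (Fin n) ℂ)
    (hF : ∀ j k : Fin n, F j k =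
      (Real.sqrt n : ℂ)⁻¹ *
        Complex.exp (2 * Real.pi * Complex.I * (j : ℕ) * (k : ℕ) / n))
    (d : Fin n → ℂ) (hd0 : ∀ s, d s ≠ 0)
    (hdim : ∀ s, (starRingEnd ℂ) (d s) = -d s)
    (α : ℝ)
    (D H : Matrix (Fin n) (Fin n) ℂ)
    (hD : D = Matrix.diagonal d)
    (hH : H = 1 - (α : ℂ) • D ^ 2)
    (B : Fin n → Matrix (Fin n) (Fin n) ℂ)
    (hB : ∀ k, B k =
      F * Matrix.diagonal (fun i => if i = k then (1 : ℂ) else 0) * F⁻¹ * D)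
    (flat : Matrix (Fin n) (Fin n) ℂ → Matrix (Fin n) (Fin n) ℂ)
    (hflat : ∀ (U : Matrix (Fin n) (Fin n) ℂ) (i s : Fin n),
      flat U i s =
        if i = (⟨0, hn⟩ : Fin n) then
          U ⟨0, hn⟩ s * ((α : ℂ) - ((d s) ^ 2)⁻¹)
        else 0)
    (C : Fin n → Fin n → Fin n → ℂ)
    (hC : ∀ i j p, C i j p = Matrix.trace ((B i)ᴴ * flat (B j) * (B p)ᴴ))
    (X : Fin n → ℂ) (p : Fin n) :
    ∑ i, ∑ j, (starRingEnd ℂ) (X i) * X j * C i j p =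
      (n : ℂ)⁻¹ *
        ((F⁻¹ * (D.map (starRingEnd ℂ)) * F) *ᵥ
            (fun s => (starRingEnd ℂ) (X s))) p *
        (starRingEnd ℂ)
          (((F⁻¹ * H * F) *ᵥ (fun s => (starRingEnd ℂ) (X s))) p) := by
  classical
  have hnne : (n : ℂ) ≠ 0 := Nat.cast_ne_zero.mpr hn.ne'
  set ω : ℂ := Complex.exp (2 * Real.pi * Complex.I / n) with hωdef
  have hω : IsPrimitiveRoot ω n := Complex.isPrimitiveRoot_exp n hn.ne'
  have hωne : ω ≠ 0 := Complex.exp_ne_zero _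
  set c : ℂ := ((Real.sqrt n : ℝ) : ℂ)⁻¹ with hcdef
  have hcc : c * c = (n : ℂ)⁻¹ := by
    rw [hcdef, ← mul_inv, ← Complex.ofReal_mul, Real.mul_self_sqrt (Nat.cast_nonneg n)]
    norm_num
  have hcconj : (starRingEnd ℂ) c = c := by
    rw [hcdef, map_inv₀, Complex.conj_ofReal]
  have hconjω : (starRingEnd ℂ) ω = ω⁻¹ := by
    rw [hωdef, ← Complex.exp_conj, ← Complex.exp_neg]
    congr 1
    simp [map_div₀, map_ofNat]
    ring
  set E : Fin n → Fin n → ℂ := fun a b => ω ^ ((a : ℕ) * (b : ℕ)) with hEdef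
  have hEne : ∀ a b, E a b ≠ 0 := fun a b => pow_ne_zero _ hωne
  have hEsymm : ∀ a b, E a b = E b a := by
    intro a b; simp only [hEdef]; rw [Nat.mul_comm]
  have hEconj : ∀ a b, (starRingEnd ℂ) (E a b) = (E a b)⁻¹ := by
    intro a b; simp only [hEdef, map_pow, hconjω, inv_pow]
  have hEz : ∀ b : Fin n, E ⟨0, hn⟩ b = 1 := by
    intro b; simp [hEdef]
  -- orthogonality of exponentials
  have key : ∀ a b : Fin n, ∑ k : Fin n, E a k * (E b k)⁻¹ = if a = b then (n : ℂ) else 0 := by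
    intro a b
    by_cases hab : a = b
    · subst hab
      rw [if_pos rfl]
      have h1 : ∀ k : Fin n, E a k * (E a k)⁻¹ = 1 := fun k => mul_inv_cancel₀ (hEne a k)
      simp [h1]
    · rw [if_neg hab]
      set x : ℂ := ω ^ ((a : ℤ) - (b : ℤ)) with hxdef
      have hterm : ∀ k : Fin n, E a k * (E b k)⁻¹ = x ^ (k : ℕ) := by
        intro k
        rw [hxdef, ← zpow_natCast (ω ^ ((a : ℤ) - (b : ℤ))), ← _root_.zpow_mul, sub_mul,
          zpow_sub₀ hωne, div_eq_mul_inv]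
        simp only [hEdef]
        rw [← zpow_natCast ω ((a : ℕ) * (k : ℕ)), ← zpow_natCast ω ((b : ℕ) * (k : ℕ))]
        push_cast
        ring_nf
      have hxne : x ≠ 1 := by
        intro h
        rw [hxdef, hω.zpow_eq_one_iff_dvd] at h
        have hd' : n ∣ ((a : ℤ) - (b : ℤ)).natAbs :=
          Int.ofNat_dvd_right.mp (Int.dvd_natAbs.mpr h)
        have h1 : (a : ℕ) < n := a.isLt
        have h2 : (b : ℕ) < n := b.isLt
        have h3 : (a : ℕ) ≠ (b : ℕ) := fun hv => hab (Fin.ext hv)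
        have h4 : ((a : ℤ) - (b : ℤ)).natAbs < n := by omega
        have h5 : ((a : ℤ) - (b : ℤ)).natAbs ≠ 0 := by omega
        exact h5 (Nat.eq_zero_of_dvd_of_lt hd' h4)
      have hxn : x ^ n = 1 := by
        rw [hxdef, ← zpow_natCast, ← _root_.zpow_mul, mul_comm, _root_.zpow_mul, zpow_natCast,
          hω.pow_eq_one, _root_.one_zpow]
      have hsum : (∑ i ∈ Finset.range n, x ^ i) = 0 := by
        have h := geom_sum_mul x n
        rw [hxn, sub_self] at h
        exact (mul_eq_zero.mp h).resolve_right (sub_ne_zero.mpr hxne)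
      calc ∑ k : Fin n, E a k * (E b k)⁻¹ = ∑ k : Fin n, x ^ (k : ℕ) :=
            Finset.sum_congr rfl fun k _ => hterm k
        _ = ∑ k ∈ Finset.range n, x ^ k := Fin.sum_univ_eq_sum_range (fun k => x ^ k) n
        _ = 0 := hsum
  -- F entries and inverse
  have hF' : ∀ j k : Fin n, F j k = c * E j k := by
    intro j k
    rw [hF j k]
    congr 1
    rw [hEdef]
    simp only []
    rw [hωdef, ← Complex.exp_nat_mul]
    congr 1
    push_cast
    ring
  set G : Matrix (Fin n) (Fin n) ℂ := Matrix.of (fun a b => c * (E a b)⁻¹) with hGdef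
  have hGapp : ∀ a b, G a b = c * (E a b)⁻¹ := fun a b => rfl
  have hFG : F * G = 1 := by
    ext a b
    rw [Matrix.mul_apply, Matrix.one_apply]
    calc ∑ k, F a k * G k b = ∑ k, (c * c) * (E a k * (E b k)⁻¹) := by
          refine Finset.sum_congr rfl fun k _ => ?_
          rw [hF', hGapp, hEsymm k b]; ring
      _ = (c * c) * ∑ k, E a k * (E b k)⁻¹ := (Finset.mul_sum _ _ _).symm
      _ = (if a = b then (1 : ℂ) else 0) := by
          rw [key, hcc]
          split_ifs
          · exact inv_mul_cancel₀ hnne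
          · exact mul_zero _
  have hFinv : F⁻¹ = G := Matrix.inv_eq_right_inv hFG
  -- entries of B
  have hB' : ∀ k a b : Fin n, B k a b = c * c * (E a k * (E k b)⁻¹ * d b) := by
    intro k a b
    rw [hB, hFinv, hD, Matrix.mul_diagonal, Matrix.mul_apply]
    have h1 : ∀ s : Fin n,
        (F * Matrix.diagonal (fun i => if i = k then (1 : ℂ) else 0)) a s * G s b
        = if s = k then F a s * G s b else 0 := by
      intro s
      rw [Matrix.mul_diagonal]
      split_ifs <;> ring
    rw [Finset.sum_congr rfl fun s _ => h1 s,
      Finset.sum_ite_eq' Finset.univ k (fun s => F a s * G s b),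
      if_pos (Finset.mem_univ k), hF', hGapp]
    ring
  -- conjugate transpose entries
  have hA : ∀ (k a b : Fin n), (B k)ᴴ a b
      = c * c * ((E b k)⁻¹ * E k a * (starRingEnd ℂ) (d a)) := by
    intro k a b
    rw [Matrix.conjTranspose_apply, hB', Complex.star_def]
    simp only [_root_.map_mul, map_inv₀, hcconj, hEconj, inv_inv]
  -- flat row entries
  have hM : ∀ (j t : Fin n), flat (B j) ⟨0, hn⟩ t
      = c * c * ((E j t)⁻¹ * (d t * ((α : ℂ) - (d t ^ 2)⁻¹))) := by
    intro j t
    rw [hflat, if_pos rfl, hB', hEz]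
    ring
  -- consequences of purely imaginary entries
  have hdh : ∀ t : Fin n, (starRingEnd ℂ) (d t) * (d t * ((α : ℂ) - (d t ^ 2)⁻¹))
      = 1 - (α : ℂ) * d t ^ 2 := by
    intro t
    rw [hdim]
    linear_combination mul_inv_cancel₀ (pow_ne_zero 2 (hd0 t))
  have hhconj : ∀ t : Fin n, (starRingEnd ℂ) (1 - (α : ℂ) * d t ^ 2)
      = 1 - (α : ℂ) * d t ^ 2 := by
    intro t
    rw [_root_.map_sub, _root_.map_one, _root_.map_mul, _root_.map_pow, hdim, Complex.conj_ofReal, neg_sq]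
  -- diagonal form of H
  have hH' : H = Matrix.diagonal (fun t => 1 - (α : ℂ) * d t ^ 2) := by
    rw [hH, hD, pow_two, Matrix.diagonal_mul_diagonal]
    ext i j
    by_cases h : i = j
    · subst h
      simp [Matrix.diagonal_apply, Matrix.one_apply, sq, smul_eq_mul]
    · simp [Matrix.diagonal_apply, Matrix.one_apply, h]
  have hDmap : D.map (starRingEnd ℂ)
      = Matrix.diagonal (fun s => (starRingEnd ℂ) (d s)) := by
    rw [hD, Matrix.diagonal_map (map_zero _)]
  -- value of C
  have hCval : ∀ i j : Fin n, C i j p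
      = c ^ 6 * ((∑ a, E i a * (E a p)⁻¹ * (starRingEnd ℂ) (d a))
          * (∑ t, (E j t)⁻¹ * E p t * (1 - (α : ℂ) * d t ^ 2))) := by
    intro i j
    rw [hC]
    have expand : Matrix.trace ((B i)ᴴ * flat (B j) * (B p)ᴴ)
        = ∑ a, ∑ t, (B i)ᴴ a ⟨0, hn⟩ * flat (B j) ⟨0, hn⟩ t * (B p)ᴴ t a := by
      rw [Matrix.trace]
      simp only [Matrix.diag_apply, Matrix.mul_apply]
      refine Finset.sum_congr rfl fun a _ => ?_
      refine Finset.sum_congr rfl fun t _ => ?_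
      congr 1
      rw [Finset.sum_eq_single (⟨0, hn⟩ : Fin n)]
      · intro s _ hs
        rw [hflat, if_neg hs, mul_zero]
      · intro h
        exact absurd (Finset.mem_univ _) h
    rw [expand, Finset.sum_mul_sum, Finset.mul_sum]
    refine Finset.sum_congr rfl fun a _ => ?_
    rw [Finset.mul_sum]
    refine Finset.sum_congr rfl fun t _ => ?_
    rw [hA i a, hM j t, hA p t a, hEz]
    linear_combination (c ^ 6 * E i a * (E a p)⁻¹ * (starRingEnd ℂ) (d a)
      * (E j t)⁻¹ * E p t) * hdh t
  -- first RHS factor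
  have hfac1 : ((F⁻¹ * (D.map (starRingEnd ℂ)) * F) *ᵥ
        (fun s => (starRingEnd ℂ) (X s))) p
      = c * c * ∑ i, (starRingEnd ℂ) (X i)
          * ∑ a, E i a * (E a p)⁻¹ * (starRingEnd ℂ) (d a) := by
    rw [hFinv, hDmap]
    simp only [Matrix.mulVec, dotProduct]
    have h1 : ∀ b, (G * Matrix.diagonal (fun s => (starRingEnd ℂ) (d s)) * F) p b
        = ∑ s, (c * (E p s)⁻¹) * (starRingEnd ℂ) (d s) * (c * E s b) := by
      intro b
      rw [Matrix.mul_apply]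
      refine Finset.sum_congr rfl fun s _ => ?_
      rw [Matrix.mul_diagonal, hGapp, hF']
    calc ∑ b, (G * Matrix.diagonal (fun s => (starRingEnd ℂ) (d s)) * F) p b
          * (starRingEnd ℂ) (X b)
        = ∑ b, ∑ s, (c * c) * ((starRingEnd ℂ) (X b)
            * (E b s * (E s p)⁻¹ * (starRingEnd ℂ) (d s))) := by
          refine Finset.sum_congr rfl fun b _ => ?_
          rw [h1, Finset.sum_mul]
          refine Finset.sum_congr rfl fun s _ => ?_
          rw [hEsymm p s, hEsymm s b]
          ring
      _ = c * c * ∑ b, (starRingEnd ℂ) (X b)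
            * ∑ s, E b s * (E s p)⁻¹ * (starRingEnd ℂ) (d s) := by
          simp only [Finset.mul_sum]
  -- second RHS factor
  have hfac2 : (starRingEnd ℂ) (((F⁻¹ * H * F) *ᵥ (fun s => (starRingEnd ℂ) (X s))) p)
      = c * c * ∑ j, X j * ∑ t, (E j t)⁻¹ * E p t * (1 - (α : ℂ) * d t ^ 2) := by
    rw [hFinv, hH']
    simp only [Matrix.mulVec, dotProduct]
    have h1 : ∀ b, (G * (Matrix.diagonal (fun t => 1 - (α : ℂ) * d t ^ 2) : Matrix (Fin n) (Fin n) ℂ) * F) p b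
        = ∑ t, (c * (E p t)⁻¹) * (1 - (α : ℂ) * d t ^ 2) * (c * E t b) := by
      intro b
      rw [Matrix.mul_apply]
      refine Finset.sum_congr rfl fun t _ => ?_
      rw [Matrix.mul_diagonal, hGapp, hF']
    calc (starRingEnd ℂ) (∑ b, (G * (Matrix.diagonal (fun t => 1 - (α : ℂ) * d t ^ 2) : Matrix (Fin n) (Fin n) ℂ) * F) p b
          * (starRingEnd ℂ) (X b))
        = (starRingEnd ℂ) (∑ b, ∑ t, (c * (E p t)⁻¹) * (1 - (α : ℂ) * d t ^ 2)
            * (c * E t b) * (starRingEnd ℂ) (X b)) := by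
          congr 1
          refine Finset.sum_congr rfl fun b _ => ?_
          rw [h1, Finset.sum_mul]
      _ = ∑ b, ∑ t, (c * c) * (X b * ((E b t)⁻¹ * E p t * (1 - (α : ℂ) * d t ^ 2))) := by
          rw [map_sum]
          refine Finset.sum_congr rfl fun b _ => ?_
          rw [map_sum]
          refine Finset.sum_congr rfl fun t _ => ?_
          simp only [_root_.map_mul, map_inv₀, hcconj, hEconj, inv_inv, hhconj, Complex.conj_conj]
          rw [hEsymm t b]
          ring
      _ = c * c * ∑ b, X b * ∑ t, (E b t)⁻¹ * E p t * (1 - (α : ℂ) * d t ^ 2) := by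
          simp only [Finset.mul_sum]
  -- assemble
  rw [hfac1, hfac2]
  have hprod : c ^ 6 * ((∑ i, (starRingEnd ℂ) (X i)
        * ∑ a, E i a * (E a p)⁻¹ * (starRingEnd ℂ) (d a))
      * (∑ j, X j * ∑ t, (E j t)⁻¹ * E p t * (1 - (α : ℂ) * d t ^ 2)))
      = ∑ i, ∑ j, (starRingEnd ℂ) (X i) * X j
          * (c ^ 6 * ((∑ a, E i a * (E a p)⁻¹ * (starRingEnd ℂ) (d a))
            * (∑ t, (E j t)⁻¹ * E p t * (1 - (α : ℂ) * d t ^ 2)))) := by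
    rw [Finset.sum_mul_sum, Finset.mul_sum]
    refine Finset.sum_congr rfl fun i _ => ?_
    rw [Finset.mul_sum]
    refine Finset.sum_congr rfl fun j _ => ?_
    ring
  calc ∑ i, ∑ j, (starRingEnd ℂ) (X i) * X j * C i j p
      = ∑ i, ∑ j, (starRingEnd ℂ) (X i) * X j
          * (c ^ 6 * ((∑ a, E i a * (E a p)⁻¹ * (starRingEnd ℂ) (d a))
            * (∑ t, (E j t)⁻¹ * E p t * (1 - (α : ℂ) * d t ^ 2)))) := by
        refine Finset.sum_congr rfl fun i _ => ?_
        refine Finset.sum_congr rfl fun j _ => ?_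
        rw [hCval]
    _ = c ^ 6 * ((∑ i, (starRingEnd ℂ) (X i)
          * ∑ a, E i a * (E a p)⁻¹ * (starRingEnd ℂ) (d a))
        * (∑ j, X j * ∑ t, (E j t)⁻¹ * E p t * (1 - (α : ℂ) * d t ^ 2))) := hprod.symm
    _ = (n : ℂ)⁻¹ * (c * c * ∑ i, (starRingEnd ℂ) (X i)
          * ∑ a, E i a * (E a p)⁻¹ * (starRingEnd ℂ) (d a))
        * (c * c * ∑ j, X j * ∑ t, (E j t)⁻¹ * E p t * (1 - (α : ℂ) * d t ^ 2)) := by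
        linear_combination (c ^ 4 * (∑ i, (starRingEnd ℂ) (X i)
            * ∑ a, E i a * (E a p)⁻¹ * (starRingEnd ℂ) (d a))
          * (∑ j, X j * ∑ t, (E j t)⁻¹ * E p t * (1 - (α : ℂ) * d t ^ 2))) * hcc
end

section
/- D-identity of the pseudospectral update rule: with the notation of the pseudospectral discretization (F the n×n normalized DFT matrix; d ∈ ℂⁿ with every d_s nonzero and purely imaginary; D = diag(d); α ∈ ℝ; H = Id − α·D²; B_k = F·I_k·F⁻¹·D; U^♭ the flat of U), define D_{ijp} = Tr(B_i^♭·B_j*·B_p*). Then for every X ∈ ℂⁿ and every index p, Σ_{i,j} X_i·conj(X_j)·D_{ijp} = (1/n)·conj( (F⁻¹·D·F·(X ⋆ (F⁻¹·H·F·conj(X))))_p ), where (x ⋆ y)_s = x_s·y_s denotes the entrywise product of vectors. -/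
open Matrix Finset ComplexConjugate

/-!
Since `F` is symmetric and unitary, `F⁻¹ = conj F`, so `B_k` has entries `F a k * conj (F k c) * d c`,
and the flat keeps only row `0`, on which `F` is the constant `1/√n`. Expanding the trace gives
`D_{ijp} = n⁻¹ ∑_{s,t} conj F_{is} h_s conj F_{tj} F_{js} F_{pt} conj d_t` with `h = 1 - α d²`
(as `d_s ≠ 0`, `d_s (α - d_s⁻²) conj d_s = h_s`). This is the coefficient of
`X_i conj X_j` in `n⁻¹ (F conj(D) F⁻¹ (conj X ⋆ F H F⁻¹ X))_p`, which is the conjugate of the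
right-hand side because `conj (F⁻¹ D F) = F conj(D) F⁻¹` and `H` is real.
-/

theorem Matrix.mul_diagonal_mul_apply {l m n R : Type*} [Fintype m] [DecidableEq m]
    [NonUnitalNonAssocSemiring R] (A : Matrix l m R) (v : m → R) (B : Matrix m n R) (a : l)
    (b : n) : (A * diagonal v * B) a b = ∑ u, A a u * v u * B u b := by
  simp only [mul_apply (M := A * diagonal v), mul_diagonal]

def Matrix.rowFlat {ι R : Type*} [DecidableEq ι] [Mul R] [Zero R] (i₀ : ι) (w : ι → R)
    (U : Matrix ι ι R) : Matrix ι ι R :=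
  of fun i s => if i = i₀ then U i₀ s * w s else 0

theorem Matrix.trace_rowFlat_mul {ι R : Type*} [Fintype ι] [DecidableEq ι]
    [NonUnitalNonAssocSemiring R] (i₀ : ι) (w : ι → R) (U M : Matrix ι ι R) :
    trace (rowFlat i₀ w U * M) = ∑ s, U i₀ s * w s * M s i₀ := by
  rw [trace, sum_eq_single i₀ (fun i _ hi => by simp [mul_apply, rowFlat, hi]) (by simp)]
  simp [mul_apply, rowFlat]

section Fourier

variable {ι : Type*} [Fintype ι] [DecidableEq ι] {F : Matrix ι ι ℂ}

theorem Matrix.inv_eq_map_conj (hFt : Fᵀ = F) (hFu : F * Fᴴ = 1) : F⁻¹ = F.map conj := by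
  rw [inv_eq_right_inv hFu, conjTranspose, hFt]
  rfl

theorem Matrix.mul_diagonal_ite_mul_inv_mul_diagonal_apply (hFinv : F⁻¹ = F.map conj)
    (d : ι → ℂ) (k a c : ι) :
    (F * diagonal (fun i => if i = k then (1 : ℂ) else 0) * F⁻¹ * diagonal d) a c =
      F a k * conj (F k c) * d c := by
  rw [mul_diagonal, mul_diagonal_mul_apply, sum_eq_single k (by simp_all) (by simp), hFinv]
  simp

theorem Matrix.map_conj_inv_mul_diagonal_mul (hFinv : F⁻¹ = F.map conj) (v : ι → ℂ) :
    (F⁻¹ * diagonal v * F).map conj = F * diagonal (conj ∘ v) * F⁻¹ := by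
  have : (F⁻¹).map conj = F := by rw [hFinv, map_map]; ext; simp
  rw [Matrix.map_mul, Matrix.map_mul, this, ← hFinv, diagonal_map (map_zero _)]
  rfl

theorem trace_rowFlat_mul_conjTranspose_mul_conjTranspose {B : ι → Matrix ι ι ℂ} {d : ι → ℂ}
    (hB : ∀ k a c, B k a c = F a k * conj (F k c) * d c) {i₀ : ι} {c : ℂ}
    (hrow : ∀ k, F i₀ k = c) (hd0 : ∀ s, d s ≠ 0) (hdim : ∀ s, conj (d s) = -d s)
    (α : ℂ) (i j p : ι) :
    trace (rowFlat i₀ (fun s => α - (d s ^ 2)⁻¹) (B i) * (B j)ᴴ * (B p)ᴴ) =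
      c * conj c * ∑ s, ∑ t,
        conj (F i s) * (1 - α * d s ^ 2) * (conj (F t j) * F j s) * (F p t * -d t) := by
  rw [Matrix.mul_assoc, trace_rowFlat_mul, mul_sum]
  refine sum_congr rfl fun s _ => ?_
  rw [mul_apply, mul_sum, mul_sum]
  refine sum_congr rfl fun t _ => ?_
  simp only [conjTranspose_apply, hB, hrow, Complex.star_def, map_mul, hdim, Complex.conj_conj]
  field_simp [hd0 s]
  ring

theorem sum_sum_mul_conj_eq_mulVec (hFt : Fᵀ = F) (hFinv : F⁻¹ = F.map conj)
    (κ : ℂ) (X h e : ι → ℂ) (p : ι) :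
    ∑ i, ∑ j, X i * conj (X j) *
        (κ * ∑ s, ∑ t, conj (F i s) * h s * (conj (F t j) * F j s) * (F p t * e t)) =
      κ * ((F * diagonal e * F⁻¹) *ᵥ
        fun j => conj (X j) * ((F * diagonal h * F⁻¹) *ᵥ X) j) p := by
  have hsymm : ∀ a b, F a b = F b a := fun a b => by rw [← transpose_apply F a b, hFt]
  simp only [mulVec, dotProduct, mul_diagonal_mul_apply, hFinv, map_apply, mul_sum, sum_mul]
  rw [sum_comm]
  refine sum_congr rfl fun j _ => sum_congr rfl fun r _ => sum_congr rfl fun s _ =>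
    sum_congr rfl fun t _ => ?_
  rw [hsymm s r]
  ring

theorem conj_inv_mul_diagonal_mul_mulVec (hFinv : F⁻¹ = F.map conj) (d h X : ι → ℂ) (p : ι) :
    conj (((F⁻¹ * diagonal d * F) *ᵥ
        fun s => X s * ((F⁻¹ * diagonal h * F) *ᵥ fun r => conj (X r)) s) p) =
      ((F * diagonal (conj ∘ d) * F⁻¹) *ᵥ
        fun s => conj (X s) * ((F * diagonal (conj ∘ h) * F⁻¹) *ᵥ X) s) p := by
  rw [RingHom.map_mulVec, map_conj_inv_mul_diagonal_mul hFinv]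
  congr 1
  funext s
  simp [RingHom.map_mulVec, map_conj_inv_mul_diagonal_mul hFinv, Function.comp_def]

end Fourier

section DFT

variable {n : ℕ} {F : Matrix (Fin n) (Fin n) ℂ}

theorem dft_transpose
    (hF : ∀ j k : Fin n, F j k =
      (Real.sqrt n : ℂ)⁻¹ * Complex.exp (2 * Real.pi * Complex.I * (j : ℕ) * (k : ℕ) / n)) :
    Fᵀ = F := by
  ext j k
  rw [transpose_apply, hF, hF]
  ring_nf

theorem dft_mul_conjTranspose_s13 (hn : 0 < n)
    (hF : ∀ j k : Fin n, F j k =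
      (Real.sqrt n : ℂ)⁻¹ * Complex.exp (2 * Real.pi * Complex.I * (j : ℕ) * (k : ℕ) / n)) :
    F * Fᴴ = 1 := by
  ext a b
  set m : ℤ := (a : ℕ) - (b : ℕ)
  set ζ : ℂ := Complex.exp (2 * Real.pi * Complex.I / n)
  have hζ : IsPrimitiveRoot ζ n := Complex.isPrimitiveRoot_exp n hn.ne'
  have hterm : ∀ s : Fin n, F a s * star (F b s) = (n : ℂ)⁻¹ * (ζ ^ m) ^ (s : ℕ) := by
    intro s
    have hsq : (Real.sqrt n : ℂ)⁻¹ * (Real.sqrt n : ℂ)⁻¹ = (n : ℂ)⁻¹ := by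
      rw [← mul_inv, ← Complex.ofReal_mul, Real.mul_self_sqrt n.cast_nonneg,
        Complex.ofReal_natCast]
    rw [hF, hF, ← zpow_natCast, ← _root_.zpow_mul, ← Complex.exp_int_mul]
    simp only [Complex.star_def, map_mul, map_inv₀, Complex.conj_ofReal, ← Complex.exp_conj,
      map_div₀, Complex.conj_I, Complex.conj_natCast, Complex.conj_ofNat]
    rw [mul_mul_mul_comm, hsq, ← Complex.exp_add]
    congr 2
    push_cast [m]
    field_simp
    ring
  have hpow : (ζ ^ m) ^ n = 1 := by
    rw [← zpow_natCast, ← _root_.zpow_mul, mul_comm, _root_.zpow_mul, zpow_natCast,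
      hζ.pow_eq_one, _root_.one_zpow]
  simp only [mul_apply, conjTranspose_apply, hterm, one_apply]
  rw [← mul_sum, Fin.sum_univ_eq_sum_range (fun i => (ζ ^ m) ^ i)]
  split_ifs with hab
  · simp [m, hab, hn.ne']
  · have hm : ζ ^ m ≠ 1 := by
      rw [Ne, hζ.zpow_eq_one_iff_dvd]
      intro hdvd
      have hlt : |m| < n := by rw [abs_sub_lt_iff]; omega
      have := Int.eq_zero_of_abs_lt_dvd hdvd hlt
      exact hab (Fin.ext (by omega))
    rw [geom_sum_eq hm, hpow, sub_self, zero_div, mul_zero]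

end DFT

/-- D-identity of the pseudospectral update rule: with `F` the normalized DFT
matrix, `D = diag(d)` (entries nonzero and purely imaginary), `H = Id − α·D²`,
`B_k = F·I_k·F⁻¹·D`, `U^♭` the flat of `U` and
`D_{ijp} = Tr(B_i^♭·B_j*·B_p*)`, one has
`Σ_{i,j} X_i·conj(X_j)·D_{ijp}
  = (1/n)·conj((F⁻¹·D·F·(X ⋆ (F⁻¹·H·F·conj(X))))_p)`,
where `⋆` denotes the entrywise product. -/
theorem pseudospectral_D_identity (n : ℕ) (hn : 0 < n)
    (F : Matrix (Fin n) (Fin n) ℂ)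
    (hF : ∀ j k : Fin n, F j k =
      (Real.sqrt n : ℂ)⁻¹ *
        Complex.exp (2 * Real.pi * Complex.I * (j : ℕ) * (k : ℕ) / n))
    (d : Fin n → ℂ) (hd0 : ∀ s, d s ≠ 0)
    (hdim : ∀ s, (starRingEnd ℂ) (d s) = -d s)
    (α : ℝ)
    (D H : Matrix (Fin n) (Fin n) ℂ)
    (hD : D = Matrix.diagonal d)
    (hH : H = 1 - (α : ℂ) • D ^ 2)
    (B : Fin n → Matrix (Fin n) (Fin n) ℂ)
    (hB : ∀ k, B k =
      F * Matrix.diagonal (fun i => if i = k then (1 : ℂ) else 0) * F⁻¹ * D)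
    (flat : Matrix (Fin n) (Fin n) ℂ → Matrix (Fin n) (Fin n) ℂ)
    (hflat : ∀ (U : Matrix (Fin n) (Fin n) ℂ) (i s : Fin n),
      flat U i s =
        if i = (⟨0, hn⟩ : Fin n) then
          U ⟨0, hn⟩ s * ((α : ℂ) - ((d s) ^ 2)⁻¹)
        else 0)
    (Dcoef : Fin n → Fin n → Fin n → ℂ)
    (hDcoef : ∀ i j p,
      Dcoef i j p = Matrix.trace (flat (B i) * (B j)ᴴ * (B p)ᴴ))
    (X : Fin n → ℂ) (p : Fin n) :
    ∑ i, ∑ j, X i * (starRingEnd ℂ) (X j) * Dcoef i j p =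
      (n : ℂ)⁻¹ *
        (starRingEnd ℂ)
          (((F⁻¹ * D * F) *ᵥ
              (fun s => X s *
                ((F⁻¹ * H * F) *ᵥ (fun r => (starRingEnd ℂ) (X r))) s)) p) := by
  have hFt := dft_transpose hF
  have hFinv : F⁻¹ = F.map conj := inv_eq_map_conj hFt (dft_mul_conjTranspose_s13 hn hF)
  have hrow : ∀ k, F ⟨0, hn⟩ k = (Real.sqrt n : ℂ)⁻¹ := fun k => by simp [hF]
  have hnorm : (Real.sqrt n : ℂ)⁻¹ * conj (Real.sqrt n : ℂ)⁻¹ = (n : ℂ)⁻¹ := by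
    rw [map_inv₀, Complex.conj_ofReal, ← mul_inv, ← Complex.ofReal_mul,
      Real.mul_self_sqrt n.cast_nonneg, Complex.ofReal_natCast]
  have hBe : ∀ k a c, B k a c = F a k * conj (F k c) * d c := fun k a c => by
    rw [hB, hD, mul_diagonal_ite_mul_inv_mul_diagonal_apply hFinv]
  have hflat' : flat = rowFlat ⟨0, hn⟩ (fun s => (α : ℂ) - (d s ^ 2)⁻¹) :=
    funext fun U => ext fun i s => hflat U i s
  have hH' : H = diagonal fun s => 1 - α * d s ^ 2 := by
    rw [hH, hD, diagonal_pow, ← diagonal_smul, ← diagonal_one, diagonal_sub]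
    rfl
  have hconj_d : conj ∘ d = fun s => -d s := funext hdim
  have hconj_h : (conj ∘ fun s => 1 - (α : ℂ) * d s ^ 2) = fun s => 1 - α * d s ^ 2 := by
    funext s; simp [hdim]
  simp only [hDcoef, hflat', trace_rowFlat_mul_conjTranspose_mul_conjTranspose hBe hrow hd0 hdim,
    hnorm, sum_sum_mul_conj_eq_mulVec hFt hFinv, hD, hH', conj_inv_mul_diagonal_mul_mulVec hFinv,
    hconj_d, hconj_h]
end
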